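/- arXiv:2404.03601 — 4 statements merged into one kernel-verified Lean document; each statement's English description precedes it below -/
import Mathlib

section
/- Let T be a 5×5 skew-symmetric matrix with zero diagonal over a commutative ring R, and let y_i := (-1)^{i+1}·Pf_i(T), where Pf_i(T) is the Pfaffian of the 4×4 skew-symmetric matrix obtained by deleting row and column i of T (for a 4×4 skew matrix with entries a_{pq}, the Pfaffian is a_{12}a_{34} - a_{13}a_{24} + a_{14}a_{23}). Then for every i ∈ {1,...,5}, the sum over j of T_{i,j}·y_j is zero; i.e., the row vector (y_1,...,y_5) times T is zero. -/
open Matrix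
/-- The Pfaffian of a 4×4 skew-symmetric matrix `(a_{pq})`:
`a_{12}a_{34} - a_{13}a_{24} + a_{14}a_{23}`. -/
def pf4 {R : Type*} [CommRing R] (M : Matrix (Fin 4) (Fin 4) R) : R :=
  M 0 1 * M 2 3 - M 0 2 * M 1 3 + M 0 3 * M 1 2

/-- The sub-maximal Pfaffian `Pf_i(T)`: the Pfaffian of the 4×4 matrix obtained from `T`
by deleting row and column `i`. -/
def pfRemove {R : Type*} [CommRing R] (T : Matrix (Fin 5) (Fin 5) R) (i : Fin 5) : R :=
  pf4 (T.submatrix i.succAbove i.succAbove)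

lemma pfRemove0 {R : Type*} [CommRing R] (T : Matrix (Fin 5) (Fin 5) R) :
    pfRemove T 0 = T 1 2 * T 3 4 - T 1 3 * T 2 4 + T 1 4 * T 2 3 := rfl
lemma pfRemove1 {R : Type*} [CommRing R] (T : Matrix (Fin 5) (Fin 5) R) :
    pfRemove T 1 = T 0 2 * T 3 4 - T 0 3 * T 2 4 + T 0 4 * T 2 3 := rfl
lemma pfRemove2 {R : Type*} [CommRing R] (T : Matrix (Fin 5) (Fin 5) R) :
    pfRemove T 2 = T 0 1 * T 3 4 - T 0 3 * T 1 4 + T 0 4 * T 1 3 := rfl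
lemma pfRemove3 {R : Type*} [CommRing R] (T : Matrix (Fin 5) (Fin 5) R) :
    pfRemove T 3 = T 0 1 * T 2 4 - T 0 2 * T 1 4 + T 0 4 * T 1 2 := rfl
lemma pfRemove4 {R : Type*} [CommRing R] (T : Matrix (Fin 5) (Fin 5) R) :
    pfRemove T 4 = T 0 1 * T 2 3 - T 0 2 * T 1 3 + T 0 3 * T 1 2 := rfl

theorem pfaffian_vector_annihilates (R : Type*) [CommRing R]
    (T : Matrix (Fin 5) (Fin 5) R) (hskew : Tᵀ = -T) (hdiag : ∀ i, T i i = 0)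
    (y : Fin 5 → R) (hy : ∀ i, y i = (-1 : R) ^ (i : ℕ) * pfRemove T i) :
    ∀ i : Fin 5, ∑ j : Fin 5, T i j * y j = 0 := by
  have hs : ∀ i j, T j i = -T i j := fun i j => by
    simpa using congrFun (congrFun hskew i) j
  have e0 : ((0 : Fin 5) : ℕ) = 0 := rfl
  have e1 : ((1 : Fin 5) : ℕ) = 1 := rfl
  have e2 : ((2 : Fin 5) : ℕ) = 2 := rfl
  have e3 : ((3 : Fin 5) : ℕ) = 3 := rfl
  have e4 : ((4 : Fin 5) : ℕ) = 4 := rfl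
  have f0 : (⟨0, by omega⟩ : Fin 5) = 0 := rfl
  have f1 : (⟨1, by omega⟩ : Fin 5) = 1 := rfl
  have f2 : (⟨2, by omega⟩ : Fin 5) = 2 := rfl
  have f3 : (⟨3, by omega⟩ : Fin 5) = 3 := rfl
  have f4 : (⟨4, by omega⟩ : Fin 5) = 4 := rfl
  intro i
  fin_cases i <;>
  · rw [Fin.sum_univ_five, hy 0, hy 1, hy 2, hy 3, hy 4,
      pfRemove0, pfRemove1, pfRemove2, pfRemove3, pfRemove4]
    simp only [f0, f1, f2, f3, f4, e0, e1, e2, e3, e4, hs 0 1, hs 0 2, hs 0 3, hs 0 4, hs 1 2, hs 1 3, hs 1 4,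
      hs 2 3, hs 2 4, hs 3 4, hdiag]
    ring
end

section
/- Let k be a field and let Q̄ be the 9×5 matrix over k with rows indexed by (k,l) for k ∈ {1,2,3}, l ∈ {1,2,3} and columns by i ∈ {1,...,5}, whose (3(k-1)+l, i)-entry is c_{i,k,l}, where the elements c_{i,k,l} ∈ k satisfy the skew-symmetry relations c_{k,i,l} = -c_{i,k,l} and c_{i,i,l} = 0 (so in particular columns 1, 2, 3 have the block structure: the (k,·) block of column k is zero and the (k,·) block of column i equals minus the (i,·) block of column k for i,k ≤ 3). Suppose at least one of the three submatrices Q̄_{rows 1,2,3; cols 2,3}, Q̄_{rows 4,5,6; cols 1,3}, Q̄_{rows 7,8,9; cols 1,2} has a nonzero 2×2 minor. Then the first three columns of Q̄ are linearly independent. -/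
lemma sum3' {M : Type*} [AddCommMonoid M] (f : Fin 3 → M) {a b c : Fin 3}
    (hab : a ≠ b) (hac : a ≠ c) (hbc : b ≠ c) :
    ∑ j, f j = f a + f b + f c := by
  fin_cases a <;> fin_cases b <;> fin_cases c <;>
    simp_all [Fin.sum_univ_three] <;> abel

lemma aux2 {K : Type*} [Field K] {a b a' b' x y : K}
    (h1 : x * a + y * b = 0) (h2 : x * a' + y * b' = 0)
    (hdet : a * b' - b * a' ≠ 0) : x = 0 ∧ y = 0 := by
  constructor
  · have hx : x * (a * b' - b * a') = (x*a + y*b)*b' - (x*a' + y*b')*b := by ring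
    rw [h1, h2] at hx; simp at hx
    exact hx.resolve_right hdet
  · have hy : y * (a * b' - b * a') = a*(x*a' + y*b') - a'*(x*a + y*b) := by ring
    rw [h1, h2] at hy; simp at hy
    exact hy.resolve_right hdet


/-- If some of the three distinguished submatrices of the 9×5 matrix `Q̄` (with entries
`c_{i,k,l}` in row `(k,l)` and column `i`, where `c` is skew-symmetric in its first two
indices) has a nonzero 2×2 minor, then the first three columns of `Q̄` are linearly
independent. Rows are indexed by pairs `(k,l) ∈ Fin 3 × Fin 3` and columns by `Fin 5`
(zero-based). -/
theorem first_three_columns_pivot (K : Type*) [Field K]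
    (c : Fin 5 → Fin 5 → Fin 3 → K)
    (hskew : ∀ i k l, c k i l = -c i k l) (hdiag : ∀ i l, c i i l = 0)
    (hminor : ∃ (k₀ : Fin 3) (j₁ j₂ : Fin 3) (l₁ l₂ : Fin 3),
      j₁ ≠ k₀ ∧ j₂ ≠ k₀ ∧ j₁ ≠ j₂ ∧ l₁ ≠ l₂ ∧
      c (Fin.castLE (by norm_num) j₁) (Fin.castLE (by norm_num) k₀) l₁ *
        c (Fin.castLE (by norm_num) j₂) (Fin.castLE (by norm_num) k₀) l₂ -
      c (Fin.castLE (by norm_num) j₂) (Fin.castLE (by norm_num) k₀) l₁ *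
        c (Fin.castLE (by norm_num) j₁) (Fin.castLE (by norm_num) k₀) l₂ ≠ 0) :
    LinearIndependent K (fun j : Fin 3 => fun p : Fin 3 × Fin 3 =>
      c (Fin.castLE (by norm_num) j) (Fin.castLE (by norm_num) p.1) p.2) := by
  obtain ⟨k₀, j₁, j₂, l₁, l₂, hj1, hj2, hj12, hl, hdet⟩ := hminor
  rw [Fintype.linearIndependent_iff]
  intro g hg
  have H : ∀ (q l : Fin 3),
      (∑ j : Fin 3, g j * c (Fin.castLE (by norm_num) j) (Fin.castLE (by norm_num) q) l) = 0 := by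
    intro q l
    have h := congrFun hg (q, l)
    simpa using h
  have E : ∀ l, g j₁ * c (Fin.castLE (by norm_num) j₁) (Fin.castLE (by norm_num) k₀) l +
      g j₂ * c (Fin.castLE (by norm_num) j₂) (Fin.castLE (by norm_num) k₀) l = 0 := by
    intro l
    have h := H k₀ l
    rw [sum3' _ hj12 hj1 hj2] at h
    simpa [hdiag] using h
  obtain ⟨hg1, hg2⟩ := aux2 (E l₁) (E l₂) hdet
  have F : ∀ l, g k₀ * c (Fin.castLE (by norm_num) j₁) (Fin.castLE (by norm_num) k₀) l = 0 := by
    intro l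
    have h := H j₁ l
    rw [sum3' _ hj12 hj1 hj2] at h
    simp only [hdiag, hg1, hg2, zero_mul, mul_zero, zero_add, add_zero] at h
    rw [hskew (Fin.castLE (by norm_num) j₁)] at h
    simpa using h
  have hk : g k₀ = 0 := by
    by_contra hk
    have z1 : c (Fin.castLE (by norm_num) j₁) (Fin.castLE (by norm_num) k₀) l₁ = 0 :=
      by have := F l₁; exact (mul_eq_zero.mp this).resolve_left hk
    have z2 : c (Fin.castLE (by norm_num) j₁) (Fin.castLE (by norm_num) k₀) l₂ = 0 :=
      by have := F l₂; exact (mul_eq_zero.mp this).resolve_left hk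
    apply hdet
    rw [z1, z2]; ring
  have tri : ∀ (i a b d : Fin 3), a ≠ d → b ≠ d → a ≠ b → i = a ∨ i = b ∨ i = d := by decide
  intro i
  rcases tri i j₁ j₂ k₀ hj1 hj2 hj12 with h | h | h <;> rw [h] <;> assumption
end

section
/- With Q the generic 6×5 matrix over ℤ[x_{211},...,x_{523}] built from the 21 variables as Q = (0, x211, x311, x411, x511; 0, x212, x312, x412, x512; 0, x213, x313, x413, x513; -x211, 0, x321, x421, x521; -x212, 0, x322, x422, x522; -x213, 0, x323, x423, x523), and E the 6×3 matrix whose entry in row indexed by (k,α,β) ∈ {1,2}×{(1,2),(1,3),(2,3)} and column indexed by (i,j) ∈ {(3,4),(3,5),(4,5)} is d^{k,i,j}_{α,β} := σ_{i,j,r}·σ_{i,j,r,h,k}·det(( Q_{3(k-1)+α, h}, Q_{3(k-1)+α, r} ; Q_{3(k-1)+β, h}, Q_{3(k-1)+β, r} )) (with {r,h} = {1,...,5}\{i,j,k}, 1 counted as column index of Q): the determinant of the 3×3 submatrix of E obtained by deleting rows 1, 2, 3 is zero, and the determinant of the 3×3 submatrix of E obtained by deleting rows 4, 5, 6 is zero.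 -/
open Matrix

noncomputable section

/-- The polynomial ring `ℤ[x_{ikl}]`. -/
abbrev PR := MvPolynomial (ℕ × ℕ × ℕ) ℤ

/-- The indeterminate `x_{ikl}`. -/
def xv (i k l : ℕ) : PR := MvPolynomial.X (i, k, l)

/-- The generic 6×5 matrix `Q` in the 21 indeterminates. -/
def Qgen : Matrix (Fin 6) (Fin 5) PR :=
  !![0, xv 2 1 1, xv 3 1 1, xv 4 1 1, xv 5 1 1;
     0, xv 2 1 2, xv 3 1 2, xv 4 1 2, xv 5 1 2;
     0, xv 2 1 3, xv 3 1 3, xv 4 1 3, xv 5 1 3;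
     -xv 2 1 1, 0, xv 3 2 1, xv 4 2 1, xv 5 2 1;
     -xv 2 1 2, 0, xv 3 2 2, xv 4 2 2, xv 5 2 2;
     -xv 2 1 3, 0, xv 3 2 3, xv 4 2 3, xv 5 2 3]

/-- The unit step function on integers. -/
def uStep (x : ℤ) : ℤ := if 0 < x then 1 else 0

/-- `σ_{i,j,r}`. -/
def sigma3 (i j r : ℤ) : ℤ :=
  (Int.negOnePow (i + j + r + 1 + uStep (r - i) + uStep (r - j) + uStep (j - i)) : ℤ)

/-- `σ_{i,j,r,h,k}`. -/
def sigma5 (i j r h k : ℤ) : ℤ :=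
  (Int.negOnePow (h + k + 1 + uStep (k - i) + uStep (k - j) + uStep (k - r) + uStep (k - h)
    + uStep (h - i) + uStep (h - j) + uStep (h - r)) : ℤ)

/-- One-based row index into `Fin 6`. -/
def row6 (n : ℕ) : Fin 6 := ⟨(n - 1) % 6, Nat.mod_lt _ (by norm_num)⟩

/-- One-based column index into `Fin 5`. -/
def col5 (n : ℕ) : Fin 5 := ⟨(n - 1) % 5, Nat.mod_lt _ (by norm_num)⟩

/-- `d^{k,i,j}_{α,β}` where `{r,h} = {1,…,5} \ {i,j,k}` (supplied explicitly):
`σ_{i,j,r} σ_{i,j,r,h,k} · det (Q_{3(k-1)+α,h}, Q_{3(k-1)+α,r}; Q_{3(k-1)+β,h}, Q_{3(k-1)+β,r})`,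
all indices one-based. -/
def dE (k i j r h α β : ℕ) : PR :=
  (sigma3 i j r * sigma5 i j r h k) •
    (Qgen (row6 (3 * (k - 1) + α)) (col5 h) * Qgen (row6 (3 * (k - 1) + β)) (col5 r) -
     Qgen (row6 (3 * (k - 1) + α)) (col5 r) * Qgen (row6 (3 * (k - 1) + β)) (col5 h))

/-- The generic 6×3 matrix `E`, rows indexed by `(k,α,β)` in the order
`(1,1,2),(1,1,3),(1,2,3),(2,1,2),(2,1,3),(2,2,3)` and columns by `(i,j)` in the order
`(3,4),(3,5),(4,5)`. -/
def Egen : Matrix (Fin 6) (Fin 3) PR :=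
  !![dE 1 3 4 2 5 1 2, dE 1 3 5 2 4 1 2, dE 1 4 5 2 3 1 2;
     dE 1 3 4 2 5 1 3, dE 1 3 5 2 4 1 3, dE 1 4 5 2 3 1 3;
     dE 1 3 4 2 5 2 3, dE 1 3 5 2 4 2 3, dE 1 4 5 2 3 2 3;
     dE 2 3 4 1 5 1 2, dE 2 3 5 1 4 1 2, dE 2 4 5 1 3 1 2;
     dE 2 3 4 1 5 1 3, dE 2 3 5 1 4 1 3, dE 2 4 5 1 3 1 3;
     dE 2 3 4 1 5 2 3, dE 2 3 5 1 4 2 3, dE 2 4 5 1 3 2 3]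

lemma np : ((Int.negOnePow 6 : ℤˣ) : ℤ) = 1 ∧ ((Int.negOnePow 8 : ℤˣ) : ℤ) = 1 ∧ ((Int.negOnePow 10 : ℤˣ) : ℤ) = 1 ∧ ((Int.negOnePow 11 : ℤˣ) : ℤ) = -1 ∧ ((Int.negOnePow 12 : ℤˣ) : ℤ) = 1 ∧ ((Int.negOnePow 13 : ℤˣ) : ℤ) = -1 := by refine ⟨?_, ?_, ?_, ?_, ?_, ?_⟩ <;> decide

lemma Eent_0_0 : Egen 0 0 = -(xv 5 1 1 * xv 2 1 2 - xv 2 1 1 * xv 5 1 2) := by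
  rw [show Egen 0 0 = dE 1 3 4 2 5 1 2 from rfl]
  rw [dE]
  simp only [show Qgen (row6 (3 * (1 - 1) + 1)) (col5 5) = xv 5 1 1 from rfl, show Qgen (row6 (3 * (1 - 1) + 1)) (col5 2) = xv 2 1 1 from rfl, show Qgen (row6 (3 * (1 - 1) + 2)) (col5 5) = xv 5 1 2 from rfl, show Qgen (row6 (3 * (1 - 1) + 2)) (col5 2) = xv 2 1 2 from rfl]
  simp [sigma3, sigma5, uStep, np, zsmul_eq_mul]
  try ring

lemma Eent_0_1 : Egen 0 1 = (xv 4 1 1 * xv 2 1 2 - xv 2 1 1 * xv 4 1 2) := by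
  rw [show Egen 0 1 = dE 1 3 5 2 4 1 2 from rfl]
  rw [dE]
  simp only [show Qgen (row6 (3 * (1 - 1) + 1)) (col5 4) = xv 4 1 1 from rfl, show Qgen (row6 (3 * (1 - 1) + 1)) (col5 2) = xv 2 1 1 from rfl, show Qgen (row6 (3 * (1 - 1) + 2)) (col5 4) = xv 4 1 2 from rfl, show Qgen (row6 (3 * (1 - 1) + 2)) (col5 2) = xv 2 1 2 from rfl]
  simp [sigma3, sigma5, uStep, np, zsmul_eq_mul]
  try ring

lemma Eent_0_2 : Egen 0 2 = -(xv 3 1 1 * xv 2 1 2 - xv 2 1 1 * xv 3 1 2) := by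
  rw [show Egen 0 2 = dE 1 4 5 2 3 1 2 from rfl]
  rw [dE]
  simp only [show Qgen (row6 (3 * (1 - 1) + 1)) (col5 3) = xv 3 1 1 from rfl, show Qgen (row6 (3 * (1 - 1) + 1)) (col5 2) = xv 2 1 1 from rfl, show Qgen (row6 (3 * (1 - 1) + 2)) (col5 3) = xv 3 1 2 from rfl, show Qgen (row6 (3 * (1 - 1) + 2)) (col5 2) = xv 2 1 2 from rfl]
  simp [sigma3, sigma5, uStep, np, zsmul_eq_mul]
  try ring

lemma Eent_1_0 : Egen 1 0 = -(xv 5 1 1 * xv 2 1 3 - xv 2 1 1 * xv 5 1 3) := by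
  rw [show Egen 1 0 = dE 1 3 4 2 5 1 3 from rfl]
  rw [dE]
  simp only [show Qgen (row6 (3 * (1 - 1) + 1)) (col5 5) = xv 5 1 1 from rfl, show Qgen (row6 (3 * (1 - 1) + 1)) (col5 2) = xv 2 1 1 from rfl, show Qgen (row6 (3 * (1 - 1) + 3)) (col5 5) = xv 5 1 3 from rfl, show Qgen (row6 (3 * (1 - 1) + 3)) (col5 2) = xv 2 1 3 from rfl]
  simp [sigma3, sigma5, uStep, np, zsmul_eq_mul]
  try ring

lemma Eent_1_1 : Egen 1 1 = (xv 4 1 1 * xv 2 1 3 - xv 2 1 1 * xv 4 1 3) := by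
  rw [show Egen 1 1 = dE 1 3 5 2 4 1 3 from rfl]
  rw [dE]
  simp only [show Qgen (row6 (3 * (1 - 1) + 1)) (col5 4) = xv 4 1 1 from rfl, show Qgen (row6 (3 * (1 - 1) + 1)) (col5 2) = xv 2 1 1 from rfl, show Qgen (row6 (3 * (1 - 1) + 3)) (col5 4) = xv 4 1 3 from rfl, show Qgen (row6 (3 * (1 - 1) + 3)) (col5 2) = xv 2 1 3 from rfl]
  simp [sigma3, sigma5, uStep, np, zsmul_eq_mul]
  try ring

lemma Eent_1_2 : Egen 1 2 = -(xv 3 1 1 * xv 2 1 3 - xv 2 1 1 * xv 3 1 3) := by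
  rw [show Egen 1 2 = dE 1 4 5 2 3 1 3 from rfl]
  rw [dE]
  simp only [show Qgen (row6 (3 * (1 - 1) + 1)) (col5 3) = xv 3 1 1 from rfl, show Qgen (row6 (3 * (1 - 1) + 1)) (col5 2) = xv 2 1 1 from rfl, show Qgen (row6 (3 * (1 - 1) + 3)) (col5 3) = xv 3 1 3 from rfl, show Qgen (row6 (3 * (1 - 1) + 3)) (col5 2) = xv 2 1 3 from rfl]
  simp [sigma3, sigma5, uStep, np, zsmul_eq_mul]
  try ring

lemma Eent_2_0 : Egen 2 0 = -(xv 5 1 2 * xv 2 1 3 - xv 2 1 2 * xv 5 1 3) := by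
  rw [show Egen 2 0 = dE 1 3 4 2 5 2 3 from rfl]
  rw [dE]
  simp only [show Qgen (row6 (3 * (1 - 1) + 2)) (col5 5) = xv 5 1 2 from rfl, show Qgen (row6 (3 * (1 - 1) + 2)) (col5 2) = xv 2 1 2 from rfl, show Qgen (row6 (3 * (1 - 1) + 3)) (col5 5) = xv 5 1 3 from rfl, show Qgen (row6 (3 * (1 - 1) + 3)) (col5 2) = xv 2 1 3 from rfl]
  simp [sigma3, sigma5, uStep, np, zsmul_eq_mul]
  try ring

lemma Eent_2_1 : Egen 2 1 = (xv 4 1 2 * xv 2 1 3 - xv 2 1 2 * xv 4 1 3) := by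
  rw [show Egen 2 1 = dE 1 3 5 2 4 2 3 from rfl]
  rw [dE]
  simp only [show Qgen (row6 (3 * (1 - 1) + 2)) (col5 4) = xv 4 1 2 from rfl, show Qgen (row6 (3 * (1 - 1) + 2)) (col5 2) = xv 2 1 2 from rfl, show Qgen (row6 (3 * (1 - 1) + 3)) (col5 4) = xv 4 1 3 from rfl, show Qgen (row6 (3 * (1 - 1) + 3)) (col5 2) = xv 2 1 3 from rfl]
  simp [sigma3, sigma5, uStep, np, zsmul_eq_mul]
  try ring

lemma Eent_2_2 : Egen 2 2 = -(xv 3 1 2 * xv 2 1 3 - xv 2 1 2 * xv 3 1 3) := by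
  rw [show Egen 2 2 = dE 1 4 5 2 3 2 3 from rfl]
  rw [dE]
  simp only [show Qgen (row6 (3 * (1 - 1) + 2)) (col5 3) = xv 3 1 2 from rfl, show Qgen (row6 (3 * (1 - 1) + 2)) (col5 2) = xv 2 1 2 from rfl, show Qgen (row6 (3 * (1 - 1) + 3)) (col5 3) = xv 3 1 3 from rfl, show Qgen (row6 (3 * (1 - 1) + 3)) (col5 2) = xv 2 1 3 from rfl]
  simp [sigma3, sigma5, uStep, np, zsmul_eq_mul]
  try ring

lemma Eent_3_0 : Egen 3 0 = (xv 5 2 1 * (-xv 2 1 2) - (-xv 2 1 1) * xv 5 2 2) := by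
  rw [show Egen 3 0 = dE 2 3 4 1 5 1 2 from rfl]
  rw [dE]
  simp only [show Qgen (row6 (3 * (2 - 1) + 1)) (col5 5) = xv 5 2 1 from rfl, show Qgen (row6 (3 * (2 - 1) + 1)) (col5 1) = (-xv 2 1 1) from rfl, show Qgen (row6 (3 * (2 - 1) + 2)) (col5 5) = xv 5 2 2 from rfl, show Qgen (row6 (3 * (2 - 1) + 2)) (col5 1) = (-xv 2 1 2) from rfl]
  simp [sigma3, sigma5, uStep, np, zsmul_eq_mul]
  try ring

lemma Eent_3_1 : Egen 3 1 = -(xv 4 2 1 * (-xv 2 1 2) - (-xv 2 1 1) * xv 4 2 2) := by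
  rw [show Egen 3 1 = dE 2 3 5 1 4 1 2 from rfl]
  rw [dE]
  simp only [show Qgen (row6 (3 * (2 - 1) + 1)) (col5 4) = xv 4 2 1 from rfl, show Qgen (row6 (3 * (2 - 1) + 1)) (col5 1) = (-xv 2 1 1) from rfl, show Qgen (row6 (3 * (2 - 1) + 2)) (col5 4) = xv 4 2 2 from rfl, show Qgen (row6 (3 * (2 - 1) + 2)) (col5 1) = (-xv 2 1 2) from rfl]
  simp [sigma3, sigma5, uStep, np, zsmul_eq_mul]
  try ring

lemma Eent_3_2 : Egen 3 2 = (xv 3 2 1 * (-xv 2 1 2) - (-xv 2 1 1) * xv 3 2 2) := by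
  rw [show Egen 3 2 = dE 2 4 5 1 3 1 2 from rfl]
  rw [dE]
  simp only [show Qgen (row6 (3 * (2 - 1) + 1)) (col5 3) = xv 3 2 1 from rfl, show Qgen (row6 (3 * (2 - 1) + 1)) (col5 1) = (-xv 2 1 1) from rfl, show Qgen (row6 (3 * (2 - 1) + 2)) (col5 3) = xv 3 2 2 from rfl, show Qgen (row6 (3 * (2 - 1) + 2)) (col5 1) = (-xv 2 1 2) from rfl]
  simp [sigma3, sigma5, uStep, np, zsmul_eq_mul]
  try ring

lemma Eent_4_0 : Egen 4 0 = (xv 5 2 1 * (-xv 2 1 3) - (-xv 2 1 1) * xv 5 2 3) := by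
  rw [show Egen 4 0 = dE 2 3 4 1 5 1 3 from rfl]
  rw [dE]
  simp only [show Qgen (row6 (3 * (2 - 1) + 1)) (col5 5) = xv 5 2 1 from rfl, show Qgen (row6 (3 * (2 - 1) + 1)) (col5 1) = (-xv 2 1 1) from rfl, show Qgen (row6 (3 * (2 - 1) + 3)) (col5 5) = xv 5 2 3 from rfl, show Qgen (row6 (3 * (2 - 1) + 3)) (col5 1) = (-xv 2 1 3) from rfl]
  simp [sigma3, sigma5, uStep, np, zsmul_eq_mul]
  try ring

lemma Eent_4_1 : Egen 4 1 = -(xv 4 2 1 * (-xv 2 1 3) - (-xv 2 1 1) * xv 4 2 3) := by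
  rw [show Egen 4 1 = dE 2 3 5 1 4 1 3 from rfl]
  rw [dE]
  simp only [show Qgen (row6 (3 * (2 - 1) + 1)) (col5 4) = xv 4 2 1 from rfl, show Qgen (row6 (3 * (2 - 1) + 1)) (col5 1) = (-xv 2 1 1) from rfl, show Qgen (row6 (3 * (2 - 1) + 3)) (col5 4) = xv 4 2 3 from rfl, show Qgen (row6 (3 * (2 - 1) + 3)) (col5 1) = (-xv 2 1 3) from rfl]
  simp [sigma3, sigma5, uStep, np, zsmul_eq_mul]
  try ring

lemma Eent_4_2 : Egen 4 2 = (xv 3 2 1 * (-xv 2 1 3) - (-xv 2 1 1) * xv 3 2 3) := by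
  rw [show Egen 4 2 = dE 2 4 5 1 3 1 3 from rfl]
  rw [dE]
  simp only [show Qgen (row6 (3 * (2 - 1) + 1)) (col5 3) = xv 3 2 1 from rfl, show Qgen (row6 (3 * (2 - 1) + 1)) (col5 1) = (-xv 2 1 1) from rfl, show Qgen (row6 (3 * (2 - 1) + 3)) (col5 3) = xv 3 2 3 from rfl, show Qgen (row6 (3 * (2 - 1) + 3)) (col5 1) = (-xv 2 1 3) from rfl]
  simp [sigma3, sigma5, uStep, np, zsmul_eq_mul]
  try ring

lemma Eent_5_0 : Egen 5 0 = (xv 5 2 2 * (-xv 2 1 3) - (-xv 2 1 2) * xv 5 2 3) := by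
  rw [show Egen 5 0 = dE 2 3 4 1 5 2 3 from rfl]
  rw [dE]
  simp only [show Qgen (row6 (3 * (2 - 1) + 2)) (col5 5) = xv 5 2 2 from rfl, show Qgen (row6 (3 * (2 - 1) + 2)) (col5 1) = (-xv 2 1 2) from rfl, show Qgen (row6 (3 * (2 - 1) + 3)) (col5 5) = xv 5 2 3 from rfl, show Qgen (row6 (3 * (2 - 1) + 3)) (col5 1) = (-xv 2 1 3) from rfl]
  simp [sigma3, sigma5, uStep, np, zsmul_eq_mul]
  try ring

lemma Eent_5_1 : Egen 5 1 = -(xv 4 2 2 * (-xv 2 1 3) - (-xv 2 1 2) * xv 4 2 3) := by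
  rw [show Egen 5 1 = dE 2 3 5 1 4 2 3 from rfl]
  rw [dE]
  simp only [show Qgen (row6 (3 * (2 - 1) + 2)) (col5 4) = xv 4 2 2 from rfl, show Qgen (row6 (3 * (2 - 1) + 2)) (col5 1) = (-xv 2 1 2) from rfl, show Qgen (row6 (3 * (2 - 1) + 3)) (col5 4) = xv 4 2 3 from rfl, show Qgen (row6 (3 * (2 - 1) + 3)) (col5 1) = (-xv 2 1 3) from rfl]
  simp [sigma3, sigma5, uStep, np, zsmul_eq_mul]
  try ring

lemma Eent_5_2 : Egen 5 2 = (xv 3 2 2 * (-xv 2 1 3) - (-xv 2 1 2) * xv 3 2 3) := by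
  rw [show Egen 5 2 = dE 2 4 5 1 3 2 3 from rfl]
  rw [dE]
  simp only [show Qgen (row6 (3 * (2 - 1) + 2)) (col5 3) = xv 3 2 2 from rfl, show Qgen (row6 (3 * (2 - 1) + 2)) (col5 1) = (-xv 2 1 2) from rfl, show Qgen (row6 (3 * (2 - 1) + 3)) (col5 3) = xv 3 2 3 from rfl, show Qgen (row6 (3 * (2 - 1) + 3)) (col5 1) = (-xv 2 1 3) from rfl]
  simp [sigma3, sigma5, uStep, np, zsmul_eq_mul]
  try ring

/-- The 3×3 minors of `E` on the bottom three rows and on the top three rows vanish. -/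
theorem det_E_del123_and_del456 :
    (Egen.submatrix ![3, 4, 5] id).det = 0 ∧ (Egen.submatrix ![0, 1, 2] id).det = 0 := by
  constructor
  · rw [Matrix.det_fin_three]
    simp only [Matrix.submatrix_apply, id, Matrix.cons_val_zero, Matrix.cons_val_one,
      Matrix.head_cons, Matrix.cons_val_two, Matrix.tail_cons,
      Eent_3_0, Eent_3_1, Eent_3_2, Eent_4_0, Eent_4_1, Eent_4_2, Eent_5_0, Eent_5_1, Eent_5_2]
    ring
  · rw [Matrix.det_fin_three]
    simp only [Matrix.submatrix_apply, id, Matrix.cons_val_zero, Matrix.cons_val_one,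
      Matrix.head_cons, Matrix.cons_val_two, Matrix.tail_cons,
      Eent_0_0, Eent_0_1, Eent_0_2, Eent_1_0, Eent_1_1, Eent_1_2, Eent_2_0, Eent_2_1, Eent_2_2]
    ring
end
end

section
/- With Q and E as in the generic setup over ℤ in 21 indeterminates, every 2×2 minor of E equals, up to sign, a 4×4 minor of Q whose column set contains columns 1 and 2; that is, for every 2×2 minor m of E there exist a choice of 4 rows of Q and 4 columns of Q including columns 1 and 2 such that m = ±(the corresponding 4×4 minor of Q). Conversely, every 4×4 minor of Q involving columns 1 and 2 equals ± some 2×2 minor of E. -/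
open Matrix

noncomputable section

/-!
Write `Q = [[0, a, B], [-a, 0, C]]` with `a` a column and `B`, `C` square blocks. The σ-signs make
every entry of `E` a signed `2 × 2` minor of `[a | B]` or `[a | C]` through the column `a`. A
`4 × 4` minor of `Q` on the columns `1, 2, h, h'` is then of one of two kinds. With two rows in each
block, Laplace expansion along the two upper rows writes it, up to sign, as the `2 × 2` minor of
`E` on the corresponding pair of rows. With three rows in one block and the row `γ` in the other, expansion
along the column of `-a` (or `a`) gives `a_γ` times a `3 × 3` minor of `[a | B]` (or `[a | C]`),
which by Sylvester's identity is the `2 × 2` minor of `E` on the two rows of that block whose index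
pairs contain `γ`. This matches the `15` row pairs of `E` with the `15` row quadruples of `Q`
(`9 + 3 + 3`); the remaining bookkeeping is reordering rows and columns, which changes a
determinant only by a sign.
-/

open Function Equiv

def EqUpToSign {α : Type*} [Neg α] (x y : α) : Prop := x = y ∨ x = -y

namespace EqUpToSign

variable {α : Type*} [InvolutiveNeg α] {x y z : α}

theorem symm (h : EqUpToSign x y) : EqUpToSign y x := by
  rcases h with rfl | rfl
  · exact .inl rfl
  · exact .inr (neg_neg y).symm

theorem trans (hxy : EqUpToSign x y) (hyz : EqUpToSign y z) : EqUpToSign x z := by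
  rcases hxy with rfl | rfl <;> rcases hyz with rfl | rfl
  exacts [.inl rfl, .inr rfl, .inr rfl, .inl (neg_neg z)]

end EqUpToSign

theorem eqUpToSign_neg_one_pow_mul {R : Type*} [Ring R] (n : ℕ) (x : R) :
    EqUpToSign ((-1) ^ n * x) x := by
  rcases neg_one_pow_eq_or R n with h | h <;> simp [h, EqUpToSign]

theorem Function.Injective.exists_perm_strictMono_comp {α : Type*} [LinearOrder α] {k : ℕ}
    {f : Fin k → α} (hf : Injective f) : ∃ σ : Perm (Fin k), StrictMono (f ∘ σ) :=
  ⟨Tuple.sort f,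
    (Tuple.monotone_sort f).strictMono_of_injective (hf.comp (Tuple.sort f).injective)⟩

namespace Matrix

variable {R : Type*} [CommRing R]

theorem det_fin_four (A : Matrix (Fin 4) (Fin 4) R) :
    A.det = A 0 0 * (A 1 1 * (A 2 2 * A 3 3 - A 2 3 * A 3 2)
               - A 1 2 * (A 2 1 * A 3 3 - A 2 3 * A 3 1)
               + A 1 3 * (A 2 1 * A 3 2 - A 2 2 * A 3 1))
    - A 0 1 * (A 1 0 * (A 2 2 * A 3 3 - A 2 3 * A 3 2)
               - A 1 2 * (A 2 0 * A 3 3 - A 2 3 * A 3 0)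
               + A 1 3 * (A 2 0 * A 3 2 - A 2 2 * A 3 0))
    + A 0 2 * (A 1 0 * (A 2 1 * A 3 3 - A 2 3 * A 3 1)
               - A 1 1 * (A 2 0 * A 3 3 - A 2 3 * A 3 0)
               + A 1 3 * (A 2 0 * A 3 1 - A 2 1 * A 3 0))
    - A 0 3 * (A 1 0 * (A 2 1 * A 3 2 - A 2 2 * A 3 1)
               - A 1 1 * (A 2 0 * A 3 2 - A 2 2 * A 3 0)
               + A 1 2 * (A 2 0 * A 3 1 - A 2 1 * A 3 0)) := by
  simp only [det_succ_row_zero (n := 3), Fin.sum_univ_four, det_fin_three, submatrix_apply,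
    Fin.succAbove, Fin.reduceSucc, Fin.reduceCastSucc, Fin.reduceLT, Fin.isValue, ite_true,
    ite_false, Fin.coe_ofNat_eq_mod]
  ring

theorem eqUpToSign_det_submatrix_perm {n : Type*} [Fintype n] [DecidableEq n]
    (A : Matrix n n R) (σ τ : Perm n) : EqUpToSign (A.submatrix σ τ).det A.det := by
  rw [show A.submatrix σ τ = (A.submatrix id τ).submatrix σ id from rfl, det_permute,
    det_permute']
  rcases Int.units_eq_one_or (Perm.sign σ) with h | h <;>
    rcases Int.units_eq_one_or (Perm.sign τ) with h' | h' <;> simp [h, h', EqUpToSign]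

theorem exists_strictMono_eqUpToSign_det_submatrix {m n : Type*} [LinearOrder m] [LinearOrder n]
    {k : ℕ} (A : Matrix m n R) {r : Fin k → m} {c : Fin k → n} (hr : Injective r)
    (hc : Injective c) :
    ∃ σ τ : Perm (Fin k), StrictMono (r ∘ σ) ∧ StrictMono (c ∘ τ) ∧
      EqUpToSign (A.submatrix r c).det (A.submatrix (r ∘ σ) (c ∘ τ)).det := by
  obtain ⟨σ, hσ⟩ := hr.exists_perm_strictMono_comp
  obtain ⟨τ, hτ⟩ := hc.exists_perm_strictMono_comp
  exact ⟨σ, τ, hσ, hτ, (eqUpToSign_det_submatrix_perm (A.submatrix r c) σ τ).symm⟩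

end Matrix

namespace BlockMinors

open Matrix

variable {R : Type*} [CommRing R]

def upperRow (l : Fin 3) : Fin 6 := Fin.castAdd 3 l
def lowerRow (l : Fin 3) : Fin 6 := Fin.natAdd 3 l
def blockCol (h : Fin 3) : Fin 5 := Fin.natAdd 2 h

def blockQ (a : Fin 3 → R) (B C : Matrix (Fin 3) (Fin 3) R) : Matrix (Fin 6) (Fin 5) R :=
  Fin.append (fun l => Fin.append ![0, a l] (B l)) (fun l => Fin.append ![-a l, 0] (C l))

/-- The row pairs `(1,2), (1,3), (2,3)` of a block. Read as indices of pairs, `pair γ` also lists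
the two pairs that contain `γ`. -/
def pair : Fin 3 → Fin 2 → Fin 3 := ![![0, 1], ![0, 2], ![1, 2]]

def pairMinor (a : Fin 3 → R) (B : Matrix (Fin 3) (Fin 3) R) (p h : Fin 3) : R :=
  a (pair p 0) * B (pair p 1) h - a (pair p 1) * B (pair p 0) h

/-- Column `j` of `E`, indexed by `(i, j) = (3,4), (3,5), (4,5)` in the paper, uses the remaining
column `h = 5, 4, 3`, which is column `j.rev` of `B` or `C`; with this choice the σ-signs of the
paper reduce to `(-1) ^ j`. -/
def blockE (a : Fin 3 → R) (B C : Matrix (Fin 3) (Fin 3) R) : Matrix (Fin 6) (Fin 3) R :=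
  Fin.append (fun p (j : Fin 3) => (-1) ^ (j : ℕ) * pairMinor a B p j.rev)
    (fun p (j : Fin 3) => (-1) ^ (j : ℕ) * pairMinor a C p j.rev)

section Entries

variable (a : Fin 3 → R) (B C : Matrix (Fin 3) (Fin 3) R)

@[simp] lemma blockQ_upperRow_zero (l : Fin 3) : blockQ a B C (upperRow l) 0 = 0 := by
  simp only [blockQ, upperRow, Fin.append_left]; rfl

@[simp] lemma blockQ_upperRow_one (l : Fin 3) : blockQ a B C (upperRow l) 1 = a l := by
  simp only [blockQ, upperRow, Fin.append_left]; rfl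

@[simp] lemma blockQ_upperRow_blockCol (l h : Fin 3) :
    blockQ a B C (upperRow l) (blockCol h) = B l h := by
  simp only [blockQ, upperRow, blockCol, Fin.append_left, Fin.append_right]

@[simp] lemma blockQ_lowerRow_zero (l : Fin 3) : blockQ a B C (lowerRow l) 0 = -a l := by
  simp only [blockQ, lowerRow, Fin.append_right]; rfl

@[simp] lemma blockQ_lowerRow_one (l : Fin 3) : blockQ a B C (lowerRow l) 1 = 0 := by
  simp only [blockQ, lowerRow, Fin.append_right]; rfl

@[simp] lemma blockQ_lowerRow_blockCol (l h : Fin 3) :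
    blockQ a B C (lowerRow l) (blockCol h) = C l h := by
  simp only [blockQ, lowerRow, blockCol, Fin.append_right]

@[simp] lemma blockE_upperRow (p j : Fin 3) :
    blockE a B C (upperRow p) j = (-1) ^ (j : ℕ) * pairMinor a B p j.rev := by
  simp only [blockE, upperRow, Fin.append_left]

@[simp] lemma blockE_lowerRow (p j : Fin 3) :
    blockE a B C (lowerRow p) j = (-1) ^ (j : ℕ) * pairMinor a C p j.rev := by
  simp only [blockE, lowerRow, Fin.append_right]

end Entries

section Minors

variable (a : Fin 3 → R) (B C : Matrix (Fin 3) (Fin 3) R) (j j' : Fin 3)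

lemma det_blockE_upperRow_lowerRow (p q : Fin 3) :
    (blockE a B C |>.submatrix ![upperRow p, lowerRow q] ![j, j']).det =
      (-1) ^ (j + j' + 1 : ℕ) *
      (blockQ a B C |>.submatrix
        ![upperRow (pair p 0), upperRow (pair p 1), lowerRow (pair q 0), lowerRow (pair q 1)]
        ![0, 1, blockCol j.rev, blockCol j'.rev]).det := by
  rw [det_fin_two, det_fin_four]
  simp only [submatrix_apply, cons_val_zero, cons_val_one, cons_val, blockE_upperRow,
    blockE_lowerRow, blockQ_upperRow_zero, blockQ_upperRow_one, blockQ_upperRow_blockCol,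
    blockQ_lowerRow_zero, blockQ_lowerRow_one, blockQ_lowerRow_blockCol, pairMinor]
  ring

lemma det_blockE_upperRow_upperRow (γ : Fin 3) :
    (blockE a B C |>.submatrix ![upperRow (pair γ 0), upperRow (pair γ 1)] ![j, j']).det =
      (-1) ^ (j + j' : ℕ) *
      (blockQ a B C |>.submatrix ![upperRow 0, upperRow 1, upperRow 2, lowerRow γ]
        ![0, 1, blockCol j.rev, blockCol j'.rev]).det := by
  rw [det_fin_two, det_fin_four]
  fin_cases γ <;>
    simp only [pair, Fin.zero_eta, Fin.mk_one, Fin.reduceFinMk, submatrix_apply, cons_val_zero,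
      cons_val_one, cons_val, blockE_upperRow, blockQ_upperRow_zero, blockQ_upperRow_one,
      blockQ_upperRow_blockCol, blockQ_lowerRow_zero, blockQ_lowerRow_one, blockQ_lowerRow_blockCol,
      pairMinor] <;>
    ring

lemma det_blockE_lowerRow_lowerRow (γ : Fin 3) :
    (blockE a B C |>.submatrix ![lowerRow (pair γ 0), lowerRow (pair γ 1)] ![j, j']).det =
      (-1) ^ (j + j' : ℕ) *
      (blockQ a B C |>.submatrix ![upperRow γ, lowerRow 0, lowerRow 1, lowerRow 2]
        ![0, 1, blockCol j.rev, blockCol j'.rev]).det := by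
  rw [det_fin_two, det_fin_four]
  fin_cases γ <;>
    simp only [pair, Fin.zero_eta, Fin.mk_one, Fin.reduceFinMk, submatrix_apply, cons_val_zero,
      cons_val_one, cons_val, blockE_lowerRow, blockQ_upperRow_zero, blockQ_upperRow_one,
      blockQ_upperRow_blockCol, blockQ_lowerRow_zero, blockQ_lowerRow_one, blockQ_lowerRow_blockCol,
      pairMinor] <;>
    ring

end Minors

lemma rows_two_cases {x y : Fin 6} (h : x < y) :
    (∃ p q, ![x, y] = ![upperRow p, lowerRow q]) ∨
      (∃ γ, ![x, y] = ![upperRow (pair γ 0), upperRow (pair γ 1)]) ∨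
      ∃ γ, ![x, y] = ![lowerRow (pair γ 0), lowerRow (pair γ 1)] := by
  revert x y; decide

lemma rows_four_cases {x y z w : Fin 6} (hxy : x < y) (hyz : y < z) (hzw : z < w) :
    (∃ p q, ![x, y, z, w] =
        ![upperRow (pair p 0), upperRow (pair p 1), lowerRow (pair q 0), lowerRow (pair q 1)]) ∨
      (∃ γ, ![x, y, z, w] = ![upperRow 0, upperRow 1, upperRow 2, lowerRow γ]) ∨
      ∃ γ, ![x, y, z, w] = ![upperRow γ, lowerRow 0, lowerRow 1, lowerRow 2] := by
  revert x y z w; decide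

lemma cols_eq {x y z w : Fin 5} (hxy : x < y) (hyz : y < z) (hzw : z < w)
    (h0 : 0 ∈ Set.range ![x, y, z, w]) (h1 : 1 ∈ Set.range ![x, y, z, w]) :
    ∃ j j' : Fin 3, j ≠ j' ∧ ![x, y, z, w] = ![0, 1, blockCol j.rev, blockCol j'.rev] := by
  revert x y z w; decide

section Injectivity

lemma injective_upperRow_lowerRow (p q : Fin 3) : Injective ![upperRow p, lowerRow q] := by
  revert p q; decide

lemma injective_upperRow_pair (γ : Fin 3) :
    Injective ![upperRow (pair γ 0), upperRow (pair γ 1)] := by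
  revert γ; decide

lemma injective_lowerRow_pair (γ : Fin 3) :
    Injective ![lowerRow (pair γ 0), lowerRow (pair γ 1)] := by
  revert γ; decide

lemma injective_upperRow_pair_lowerRow_pair (p q : Fin 3) :
    Injective
      ![upperRow (pair p 0), upperRow (pair p 1), lowerRow (pair q 0), lowerRow (pair q 1)] := by
  revert p q; decide

lemma injective_upperRows_lowerRow (γ : Fin 3) :
    Injective ![upperRow 0, upperRow 1, upperRow 2, lowerRow γ] := by
  revert γ; decide

lemma injective_upperRow_lowerRows (γ : Fin 3) :
    Injective ![upperRow γ, lowerRow 0, lowerRow 1, lowerRow 2] := by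
  revert γ; decide

lemma injective_cols {j j' : Fin 3} (h : j ≠ j') :
    Injective ![(0 : Fin 5), 1, blockCol j.rev, blockCol j'.rev] := by
  revert j j'; decide

end Injectivity

section Correspondence

variable (a : Fin 3 → R) (B C : Matrix (Fin 3) (Fin 3) R)

lemma exists_blockQ_minor_of_strictMono {r : Fin 2 → Fin 6} {c : Fin 2 → Fin 3}
    (hr : StrictMono r) (hc : StrictMono c) :
    ∃ (r' : Fin 4 → Fin 6) (c' : Fin 4 → Fin 5), Injective r' ∧ Injective c' ∧
      0 ∈ Set.range c' ∧ 1 ∈ Set.range c' ∧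
      EqUpToSign (blockE a B C |>.submatrix r c).det (blockQ a B C |>.submatrix r' c').det := by
  have hcols := injective_cols (hc.injective.ne zero_ne_one)
  rw [show r = ![r 0, r 1] from (FinVec.etaExpand_eq r).symm,
    show c = ![c 0, c 1] from (FinVec.etaExpand_eq c).symm]
  rcases rows_two_cases (hr zero_lt_one) with ⟨p, q, h⟩ | ⟨γ, h⟩ | ⟨γ, h⟩ <;> rw [h]
  · refine ⟨_, _, injective_upperRow_pair_lowerRow_pair p q, hcols, ⟨0, rfl⟩, ⟨1, rfl⟩,
      ?_⟩
    rw [det_blockE_upperRow_lowerRow]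
    exact eqUpToSign_neg_one_pow_mul _ _
  · refine ⟨_, _, injective_upperRows_lowerRow γ, hcols, ⟨0, rfl⟩, ⟨1, rfl⟩, ?_⟩
    rw [det_blockE_upperRow_upperRow]
    exact eqUpToSign_neg_one_pow_mul _ _
  · refine ⟨_, _, injective_upperRow_lowerRows γ, hcols, ⟨0, rfl⟩, ⟨1, rfl⟩, ?_⟩
    rw [det_blockE_lowerRow_lowerRow]
    exact eqUpToSign_neg_one_pow_mul _ _

lemma exists_blockE_minor_of_strictMono {r' : Fin 4 → Fin 6} {c' : Fin 4 → Fin 5}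
    (hr : StrictMono r') (hc : StrictMono c') (h0 : 0 ∈ Set.range c') (h1 : 1 ∈ Set.range c') :
    ∃ (r : Fin 2 → Fin 6) (c : Fin 2 → Fin 3), Injective r ∧ Injective c ∧
      EqUpToSign (blockQ a B C |>.submatrix r' c').det (blockE a B C |>.submatrix r c).det := by
  have hc4 : c' = ![c' 0, c' 1, c' 2, c' 3] := (FinVec.etaExpand_eq c').symm
  rw [hc4] at h0 h1
  rw [show r' = ![r' 0, r' 1, r' 2, r' 3] from (FinVec.etaExpand_eq r').symm, hc4]
  have h01 : (0 : Fin 4) < 1 := by decide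
  have h12 : (1 : Fin 4) < 2 := by decide
  have h23 : (2 : Fin 4) < 3 := by decide
  obtain ⟨j, j', hj, hc'⟩ := cols_eq (hc h01) (hc h12) (hc h23) h0 h1
  have hcols : Injective ![j, j'] := injective_pair_iff_ne.2 hj
  rcases rows_four_cases (hr h01) (hr h12) (hr h23) with
    ⟨p, q, h⟩ | ⟨γ, h⟩ | ⟨γ, h⟩ <;> rw [h, hc']
  · refine ⟨_, _, injective_upperRow_lowerRow p q, hcols, ?_⟩
    rw [det_blockE_upperRow_lowerRow]
    exact (eqUpToSign_neg_one_pow_mul _ _).symm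
  · refine ⟨_, _, injective_upperRow_pair γ, hcols, ?_⟩
    rw [det_blockE_upperRow_upperRow]
    exact (eqUpToSign_neg_one_pow_mul _ _).symm
  · refine ⟨_, _, injective_lowerRow_pair γ, hcols, ?_⟩
    rw [det_blockE_lowerRow_lowerRow]
    exact (eqUpToSign_neg_one_pow_mul _ _).symm

theorem exists_blockQ_minor {r : Fin 2 → Fin 6} {c : Fin 2 → Fin 3} (hr : Injective r)
    (hc : Injective c) :
    ∃ (r' : Fin 4 → Fin 6) (c' : Fin 4 → Fin 5), Injective r' ∧ Injective c' ∧
      0 ∈ Set.range c' ∧ 1 ∈ Set.range c' ∧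
      EqUpToSign (blockE a B C |>.submatrix r c).det (blockQ a B C |>.submatrix r' c').det := by
  obtain ⟨σ, τ, hσ, hτ, hdet⟩ :=
    (blockE a B C).exists_strictMono_eqUpToSign_det_submatrix hr hc
  obtain ⟨r', c', hr', hc', h0, h1, h⟩ := exists_blockQ_minor_of_strictMono a B C hσ hτ
  exact ⟨r', c', hr', hc', h0, h1, hdet.trans h⟩

theorem exists_blockE_minor {r' : Fin 4 → Fin 6} {c' : Fin 4 → Fin 5} (hr : Injective r')
    (hc : Injective c') (h0 : 0 ∈ Set.range c') (h1 : 1 ∈ Set.range c') :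
    ∃ (r : Fin 2 → Fin 6) (c : Fin 2 → Fin 3), Injective r ∧ Injective c ∧
      EqUpToSign (blockQ a B C |>.submatrix r' c').det (blockE a B C |>.submatrix r c).det := by
  obtain ⟨σ, τ, hσ, hτ, hdet⟩ :=
    (blockQ a B C).exists_strictMono_eqUpToSign_det_submatrix hr hc
  rw [← EquivLike.range_comp c' τ] at h0 h1
  obtain ⟨r, c, hr, hc, h⟩ := exists_blockE_minor_of_strictMono a B C hσ hτ h0 h1
  exact ⟨r, c, hr, hc, hdet.trans h⟩

end Correspondence

end BlockMinors

open BlockMinors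

def genericA : Fin 3 → PR := fun l => xv 2 1 (l + 1)

def genericB : Matrix (Fin 3) (Fin 3) PR := Matrix.of fun l h => xv (h + 3) 1 (l + 1)

def genericC : Matrix (Fin 3) (Fin 3) PR := Matrix.of fun l h => xv (h + 3) 2 (l + 1)

lemma Qgen_eq_blockQ : Qgen = blockQ genericA genericB genericC := by
  refine Matrix.ext fun i j => ?_
  fin_cases i <;> fin_cases j <;> rfl

lemma Egen_eq_blockE : Egen = blockE genericA genericB genericC := by
  refine Matrix.ext fun i j => ?_
  fin_cases i <;> fin_cases j <;>
    simp [Egen, dE, sigma3, sigma5, uStep, row6, col5, Qgen, blockE, Fin.append, Fin.addCases,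
      pairMinor, pair, genericA, genericB, genericC] <;> ring

/-- Up to sign, the 2×2 minors of `E` and the 4×4 minors of `Q` involving the first two
columns coincide. -/
theorem minors2E_eq_minors4Q :
    (∀ (r : Fin 2 → Fin 6) (c : Fin 2 → Fin 3),
        Function.Injective r → Function.Injective c →
        ∃ (r' : Fin 4 → Fin 6) (c' : Fin 4 → Fin 5),
          Function.Injective r' ∧ Function.Injective c' ∧
          (0 : Fin 5) ∈ Set.range c' ∧ (1 : Fin 5) ∈ Set.range c' ∧
          ((Egen.submatrix r c).det = (Qgen.submatrix r' c').det ∨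
            (Egen.submatrix r c).det = -(Qgen.submatrix r' c').det)) ∧
    (∀ (r' : Fin 4 → Fin 6) (c' : Fin 4 → Fin 5),
        Function.Injective r' → Function.Injective c' →
        (0 : Fin 5) ∈ Set.range c' → (1 : Fin 5) ∈ Set.range c' →
        ∃ (r : Fin 2 → Fin 6) (c : Fin 2 → Fin 3),
          Function.Injective r ∧ Function.Injective c ∧
          ((Qgen.submatrix r' c').det = (Egen.submatrix r c).det ∨
            (Qgen.submatrix r' c').det = -(Egen.submatrix r c).det)) := by
  rw [Qgen_eq_blockQ, Egen_eq_blockE]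
  exact ⟨fun _ _ hr hc => exists_blockQ_minor _ _ _ hr hc,
    fun _ _ hr hc h0 h1 => exists_blockE_minor _ _ _ hr hc h0 h1⟩
end
end
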